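/- arXiv:2512.12392 — 2 statements merged into one kernel-verified Lean document; each statement's English description precedes it below -/
import Mathlib

section
/- Let (b_n) be a real sequence with b_n → b ∈ ℝ and let δ > 0. For n large enough that p_n := 1/2 + b_n/(4n) ∈ (0,1), define f_n : [0,1] → ℝ by f_n(s) = (1 − p_n)/(1 − p_n s). Then n · (1 − f_n^{∘⌊nδ⌋}(0)) converges, as n → ∞, to h(b,δ), where h(b,δ) = 1/δ if b = 0 and h(b,δ) = b/(1 − e^{−bδ}) if b ≠ 0. (Equivalently: the probability that a Galton–Watson process with geometric offspring law P(N = k) = p_n^k (1 − p_n), started from one individual, is still alive in generation ⌊nδ⌋ is asymptotic to h(b,δ)/n.) -/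
open Filter Real Finset


private lemma iterate_eq (p : ℝ) (hp0 : 0 < p) (hp1 : p < 1) (k : ℕ) :
    (fun s : ℝ => (1-p)/(1-p*s))^[k] 0
      = 1 - 1/(∑ j ∈ Finset.range (k+1), ((1-p)/p)^j) := by
  have hr : 0 < (1-p)/p := div_pos (by linarith) hp0
  induction k with
  | zero => simp
  | succ k ih =>
    have hT : 0 < ∑ j ∈ Finset.range (k+1), ((1-p)/p)^j :=
      Finset.sum_pos (fun j _ => pow_pos hr j) (by simp)
    rw [Function.iterate_succ_apply', geom_sum_succ, ih]
    set T := ∑ j ∈ Finset.range (k+1), ((1-p)/p)^j with hTdef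
    have hden : 0 < (1-p)*T + p := by nlinarith
    show (1-p)/(1 - p*(1 - 1/T)) = 1 - 1/((1-p)/p * T + 1)
    have h1 : 1 - p*(1 - 1/T) = ((1-p)*T+p)/T := by field_simp; ring
    have h2 : (1-p)/p * T + 1 = ((1-p)*T+p)/p := by field_simp
    rw [h1, h2, div_div_eq_mul_div, one_div_div, eq_sub_iff_add_eq, ← add_div]
    rw [div_eq_one_iff_eq hden.ne']


private noncomputable def G (x : ℝ) : ℝ := if x = 0 then 1 else Real.log (1+x)/x

private lemma tendsto_G : Tendsto G (nhds 0) (nhds 1) := by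
  have hd : HasDerivAt (fun x : ℝ => Real.log (1+x)) 1 0 := by
    have := (Real.hasDerivAt_log (by norm_num : (1:ℝ) + 0 ≠ 0)).comp 0
      ((hasDerivAt_id 0).const_add 1)
    simpa [Function.comp_def] using this
  have h1 : Tendsto (fun x : ℝ => Real.log (1+x)/x) (nhdsWithin 0 {0}ᶜ) (nhds 1) := by
    have := hasDerivAt_iff_tendsto_slope.mp hd
    refine this.congr (fun x => ?_)
    simp [slope_def_field]
  have h2 : Tendsto G (nhdsWithin 0 {0}ᶜ) (nhds 1) := by
    refine h1.congr' ?_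
    filter_upwards [self_mem_nhdsWithin] with x hx
    simp only [Set.mem_compl_iff, Set.mem_singleton_iff] at hx
    simp [G, hx]
  have h3 : Tendsto G (pure (0:ℝ)) (nhds 1) := by
    rw [tendsto_pure_left]
    intro s hs
    have hG : G 0 = 1 := if_pos rfl
    rw [hG]; exact mem_of_mem_nhds hs
  have : nhds (0:ℝ) = nhdsWithin 0 {0}ᶜ ⊔ pure 0 := (nhdsNE_sup_pure 0).symm
  rw [this]
  exact Tendsto.sup h2 h3

private lemma pow_lim {a : ℕ → ℝ} {c : ℝ}
    (ha : Tendsto (fun n : ℕ => (n:ℝ)*(a n - 1)) atTop (nhds c))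
    {m : ℕ → ℕ} {d : ℝ} (hm : Tendsto (fun n => (m n : ℝ)/(n:ℝ)) atTop (nhds d)) :
    Tendsto (fun n => a n ^ m n) atTop (nhds (Real.exp (d*c))) := by
  have hinv : Tendsto (fun n : ℕ => ((n:ℝ))⁻¹) atTop (nhds 0) :=
    tendsto_inv_atTop_zero.comp tendsto_natCast_atTop_atTop
  have ha1 : Tendsto a atTop (nhds 1) := by
    have h0 : Tendsto (fun n => a n - 1) atTop (nhds 0) := by
      have := ha.mul hinv
      rw [mul_zero] at this
      refine this.congr' ?_
      filter_upwards [eventually_ne_atTop 0] with n hn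
      have : (n:ℝ) ≠ 0 := Nat.cast_ne_zero.mpr hn
      field_simp
    have := h0.add_const 1
    simpa using this
  have hlog : Tendsto (fun n : ℕ => (n:ℝ) * Real.log (a n)) atTop (nhds c) := by
    have hG : Tendsto (fun n => G (a n - 1)) atTop (nhds 1) := by
      apply tendsto_G.comp
      have := ha1.sub_const 1
      simpa using this
    have := ha.mul hG
    rw [mul_one] at this
    refine this.congr (fun n => ?_)
    by_cases h : a n - 1 = 0
    · have : a n = 1 := by linarith
      simp [G, h, this]
    · simp only [G, if_neg h]
      have : 1 + (a n - 1) = a n := by ring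
      rw [this]
      field_simp
  have hml : Tendsto (fun n => (m n : ℝ) * Real.log (a n)) atTop (nhds (d*c)) := by
    have := hm.mul hlog
    refine this.congr' ?_
    filter_upwards [eventually_ne_atTop 0] with n hn
    have hn' : (n:ℝ) ≠ 0 := Nat.cast_ne_zero.mpr hn
    field_simp
  have hexp := (Real.continuous_exp.tendsto _).comp hml
  refine hexp.congr' ?_
  have hpos : ∀ᶠ n in atTop, 0 < a n := ha1.eventually (eventually_gt_nhds (by norm_num))
  filter_upwards [hpos] with n hn
  simp only [Function.comp]
  rw [mul_comm, Real.exp_mul, Real.exp_log hn, Real.rpow_natCast]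

private lemma core (r : ℕ → ℝ) (k : ℕ → ℕ) (bl δ : ℝ) (hδ : 0 < δ)
    (hrpos : ∀ᶠ n in atTop, 0 < r n)
    (hA : Tendsto (fun n : ℕ => (n:ℝ)*(r n - 1)) atTop (nhds (-bl)))
    (hm1 : Tendsto (fun n : ℕ => ((k n : ℝ))/(n:ℝ)) atTop (nhds δ)) :
    Tendsto (fun n : ℕ => (∑ j ∈ Finset.range (k n + 1), r n ^ j) / (n:ℝ)) atTop
      (nhds (if bl = 0 then δ else (1 - Real.exp (-bl*δ))/bl)) := by
  have hinv : Tendsto (fun n : ℕ => ((n:ℝ))⁻¹) atTop (nhds 0) :=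
    tendsto_inv_atTop_zero.comp tendsto_natCast_atTop_atTop
  have hm2 : Tendsto (fun n : ℕ => ((k n + 1 : ℕ) : ℝ)/(n:ℝ)) atTop (nhds δ) := by
    have h := hm1.add hinv
    rw [add_zero] at h
    refine h.congr (fun n => ?_)
    push_cast
    rw [add_div, one_div]
  have hpow1 : Tendsto (fun n => r n ^ (k n + 1)) atTop (nhds (Real.exp (δ * -bl))) :=
    pow_lim hA hm2
  by_cases hbl : bl = 0
  · subst hbl
    simp only [if_pos rfl]
    have hpowk : Tendsto (fun n => r n ^ (k n)) atTop (nhds 1) := by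
      have := pow_lim hA hm1
      simpa using this
    have hlow : Tendsto (fun n : ℕ => ((k n + 1 : ℕ):ℝ)/n * min (r n ^ k n) 1) atTop
        (nhds δ) := by
      have := hm2.mul (hpowk.min (tendsto_const_nhds : Tendsto (fun _ : ℕ => (1:ℝ)) atTop (nhds 1)))
      simpa using this
    have hup : Tendsto (fun n : ℕ => ((k n + 1 : ℕ):ℝ)/n * max (r n ^ k n) 1) atTop
        (nhds δ) := by
      have := hm2.mul (hpowk.max (tendsto_const_nhds : Tendsto (fun _ : ℕ => (1:ℝ)) atTop (nhds 1)))
      simpa using this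
    apply tendsto_of_tendsto_of_tendsto_of_le_of_le' hlow hup
    · filter_upwards [hrpos, eventually_gt_atTop 0] with n hr hn
      have hnpos : 0 < (n:ℝ) := Nat.cast_pos.mpr hn
      rw [div_mul_eq_mul_div, div_le_div_iff_of_pos_right hnpos]
      calc ((k n + 1 : ℕ):ℝ) * min (r n ^ k n) 1
          = ∑ _j ∈ Finset.range (k n + 1), min (r n ^ k n) 1 := by
            rw [Finset.sum_const, Finset.card_range, nsmul_eq_mul]
        _ ≤ ∑ j ∈ Finset.range (k n + 1), r n ^ j := by
            apply Finset.sum_le_sum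
            intro j hj
            have hjk : j ≤ k n := Nat.lt_succ_iff.mp (Finset.mem_range.mp hj)
            rcases le_total (r n) 1 with h1 | h1
            · exact le_trans (min_le_left _ _) (pow_le_pow_of_le_one hr.le h1 hjk)
            · exact le_trans (min_le_right _ _) (one_le_pow₀ h1)
    · filter_upwards [hrpos, eventually_gt_atTop 0] with n hr hn
      have hnpos : 0 < (n:ℝ) := Nat.cast_pos.mpr hn
      rw [div_mul_eq_mul_div, div_le_div_iff_of_pos_right hnpos]
      calc ∑ j ∈ Finset.range (k n + 1), r n ^ j
          ≤ ∑ _j ∈ Finset.range (k n + 1), max (r n ^ k n) 1 := by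
            apply Finset.sum_le_sum
            intro j hj
            have hjk : j ≤ k n := Nat.lt_succ_iff.mp (Finset.mem_range.mp hj)
            rcases le_total (r n) 1 with h1 | h1
            · exact le_trans (pow_le_one₀ hr.le h1) (le_max_right _ _)
            · exact le_trans (pow_le_pow_right₀ h1 hjk) (le_max_left _ _)
        _ = ((k n + 1 : ℕ):ℝ) * max (r n ^ k n) 1 := by
            rw [Finset.sum_const, Finset.card_range, nsmul_eq_mul]
  · simp only [if_neg hbl]
    have hbl' : -bl ≠ 0 := neg_ne_zero.mpr hbl
    have hne1 : ∀ᶠ n : ℕ in atTop, r n ≠ 1 := by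
      filter_upwards [hA.eventually_ne (show -bl ≠ 0 from hbl')] with n h1
      intro hr1
      apply h1
      simp [hr1]
    have hdiv := (hpow1.sub_const 1).div hA hbl'
    have hval : (Real.exp (δ * -bl) - 1)/(-bl) = (1 - Real.exp (-bl*δ))/bl := by
      rw [show δ * -bl = -bl*δ by ring]
      field_simp
      ring
    rw [hval] at hdiv
    refine hdiv.congr' ?_
    filter_upwards [hne1, eventually_ne_atTop 0] with n h1 hn
    have hn' : (n:ℝ) ≠ 0 := Nat.cast_ne_zero.mpr hn
    simp only [Pi.div_apply]
    rw [geom_sum_eq h1, div_div, mul_comm]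

/-- **Asymptotic survival probability of a critical geometric Galton–Watson process.**
Let `b n → bl` and `δ > 0`. With `p n = 1/2 + b n / (4n)` and
`f n s = (1 - p n)/(1 - p n * s)` (the pgf of the geometric law with parameter `p n`),
the quantity `n · (1 - f n^[⌊nδ⌋] 0)` converges to `h (bl, δ)`, where
`h (b, δ) = 1/δ` if `b = 0` and `h (b, δ) = b / (1 - exp (-bδ))` otherwise. -/
theorem survival_asymptotics_geometric_GW
    (b : ℕ → ℝ) (bl : ℝ) (hb : Tendsto b atTop (nhds bl))
    (δ : ℝ) (hδ : 0 < δ) :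
    Tendsto
      (fun n : ℕ =>
        (n : ℝ) *
          (1 - (fun s : ℝ =>
              (1 - (1 / 2 + b n / (4 * (n : ℝ)))) /
                (1 - (1 / 2 + b n / (4 * (n : ℝ))) * s))^[⌊(n : ℝ) * δ⌋₊] 0))
      atTop
      (nhds (if bl = 0 then 1 / δ else bl / (1 - Real.exp (-bl * δ)))) := by
  have hinv : Tendsto (fun n : ℕ => ((n:ℝ))⁻¹) atTop (nhds 0) :=
    tendsto_inv_atTop_zero.comp tendsto_natCast_atTop_atTop
  have hb4 : Tendsto (fun n : ℕ => b n / (4*(n:ℝ))) atTop (nhds 0) := by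
    have h := hb.mul hinv
    rw [mul_zero] at h
    have h4 := h.div_const 4
    rw [zero_div] at h4
    refine h4.congr (fun n => ?_)
    rw [← div_eq_mul_inv, div_div, mul_comm]
  have hp2 : Tendsto (fun n : ℕ => 1/2 + b n/(4*(n:ℝ))) atTop (nhds (1/2 : ℝ)) := by
    have := (tendsto_const_nhds : Tendsto (fun _ : ℕ => (1/2:ℝ)) atTop (nhds (1/2))).add hb4
    simpa using this
  have hpev : ∀ᶠ n : ℕ in atTop,
      0 < 1/2 + b n/(4*(n:ℝ)) ∧ 1/2 + b n/(4*(n:ℝ)) < 1 := by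
    filter_upwards [hp2 (Ioo_mem_nhds (by norm_num : (0:ℝ) < 1/2) (by norm_num : (1/2:ℝ) < 1))] with n hn
    exact ⟨hn.1, hn.2⟩
  have hrpos : ∀ᶠ n : ℕ in atTop,
      0 < (1 - (1/2 + b n/(4*(n:ℝ))))/(1/2 + b n/(4*(n:ℝ))) := by
    filter_upwards [hpev] with n hp
    exact div_pos (by linarith [hp.2]) hp.1
  have hA : Tendsto (fun n : ℕ =>
      (n:ℝ)*((1 - (1/2 + b n/(4*(n:ℝ))))/(1/2 + b n/(4*(n:ℝ))) - 1)) atTop (nhds (-bl)) := by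
    have hnum : Tendsto (fun n : ℕ => -(b n)/2) atTop (nhds (-bl/2)) := hb.neg.div_const 2
    have hdiv := hnum.div hp2 (by norm_num)
    have hv : (-bl/2)/(1/2:ℝ) = -bl := by ring
    rw [hv] at hdiv
    refine hdiv.congr' ?_
    filter_upwards [hpev, eventually_ne_atTop 0] with n hp hn
    have hn' : (n:ℝ) ≠ 0 := Nat.cast_ne_zero.mpr hn
    have hpne : (1/2 + b n/(4*(n:ℝ))) ≠ 0 := hp.1.ne'
    simp only [Pi.div_apply]
    have e1 : (1 - (1/2 + b n/(4*(n:ℝ))))/(1/2 + b n/(4*(n:ℝ))) - 1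
        = ((1 - (1/2 + b n/(4*(n:ℝ)))) - (1/2 + b n/(4*(n:ℝ))))/(1/2 + b n/(4*(n:ℝ))) :=
      div_sub_one hpne
    have e2 : (1 - (1/2 + b n/(4*(n:ℝ)))) - (1/2 + b n/(4*(n:ℝ))) = -(b n)/(2*(n:ℝ)) := by
      field_simp
      ring
    have e3 : (n:ℝ) * (-(b n)/(2*(n:ℝ))) = -(b n)/2 := by
      field_simp
    rw [e1, e2, ← mul_div_assoc, e3]
  have hm1 : Tendsto (fun n : ℕ => ((⌊(n:ℝ)*δ⌋₊ : ℝ))/(n:ℝ)) atTop (nhds δ) := by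
    have := (tendsto_nat_floor_mul_div_atTop hδ.le).comp
      (tendsto_natCast_atTop_atTop (R := ℝ))
    refine this.congr (fun n => ?_)
    simp [Function.comp, mul_comm]
  have hcore := core _ _ bl δ hδ hrpos hA hm1
  have hLpos : 0 < (if bl = 0 then δ else (1 - Real.exp (-bl*δ))/bl) := by
    split
    · exact hδ
    · rename_i h
      rcases lt_or_gt_of_ne h with hlt | hgt
      · have h1 : 1 < Real.exp (-bl*δ) := by
          rw [Real.one_lt_exp_iff]
          nlinarith
        apply div_pos_of_neg_of_neg <;> linarith
      · have h1 : Real.exp (-bl*δ) < 1 := by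
          rw [Real.exp_lt_one_iff]
          nlinarith
        apply div_pos <;> linarith
  have hfin := hcore.inv₀ hLpos.ne'
  have hval : (if bl = 0 then δ else (1 - Real.exp (-bl*δ))/bl)⁻¹
      = (if bl = 0 then 1/δ else bl/(1 - Real.exp (-bl*δ))) := by
    split
    · rw [one_div]
    · rw [inv_div]
  rw [hval] at hfin
  refine hfin.congr' ?_
  filter_upwards [hpev, eventually_ne_atTop 0] with n hp hn
  have hn' : (n:ℝ) ≠ 0 := Nat.cast_ne_zero.mpr hn
  rw [iterate_eq _ hp.1 hp.2]
  have hr : 0 < (1 - (1/2 + b n/(4*(n:ℝ))))/(1/2 + b n/(4*(n:ℝ))) :=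
    div_pos (by linarith [hp.2]) hp.1
  have hT : 0 < ∑ j ∈ Finset.range (⌊(n:ℝ)*δ⌋₊+1),
      ((1 - (1/2 + b n/(4*(n:ℝ))))/(1/2 + b n/(4*(n:ℝ))))^j :=
    Finset.sum_pos (fun j _ => pow_pos hr j) (by simp)
  rw [inv_div]
  field_simp
  ring
end

section
/- Let v ∈ (0,1/2), let (β_i)_{i≥1} be a sequence of reals with β_i ∈ (v, 1−v) for all i, and let (D_n)_{n≥1} be positive reals with D_n → ∞. Define β_i^{(n)} := 1/(1 + ((1−β_i)/β_i)^{1/D_n}). Then for every t ≥ 0, (1/n) · Σ_{i=1}^{⌊nt⌋} β_i^{(n)}/(1−β_i^{(n)})² → 2t as n → ∞. -/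
open Filter Real Finset

/-- **Kurtz's variance condition for the rescaled geometric environment.**
If `β i ∈ (v, 1-v)` for all `i`, `D n > 0`, `D n → ∞` and
`βn n i = 1/(1 + ((1 - β i)/β i)^{1/D n})`, then for every `t ≥ 0`,
`(1/n) · ∑_{i=1}^{⌊nt⌋} βn n i / (1 - βn n i)² → 2t`. -/
theorem variance_condition_rescaled_environment
    (v : ℝ) (hv : v ∈ Set.Ioo (0 : ℝ) (1 / 2))
    (β : ℕ → ℝ) (hβ : ∀ i, β i ∈ Set.Ioo v (1 - v))
    (D : ℕ → ℝ) (hDpos : ∀ n, 0 < D n) (hDtop : Tendsto D atTop atTop)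
    (βn : ℕ → ℕ → ℝ)
    (hβn : ∀ n i, βn n i = 1 / (1 + ((1 - β i) / β i) ^ (1 / D n)))
    (t : ℝ) (ht : 0 ≤ t) :
    Tendsto
      (fun n : ℕ =>
        (1 / (n : ℝ)) * ∑ i ∈ Finset.Icc 1 ⌊(n : ℝ) * t⌋₊, βn n i / (1 - βn n i) ^ 2)
      atTop (nhds (2 * t)) := by
  obtain ⟨hv0, hv2⟩ := hv
  have hv1 : v < 1 - v := by linarith
  set c : ℝ := (1 - v) / v with hc
  have hc1 : 1 < c := (one_lt_div hv0).2 hv1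
  have hc0 : 0 < c := lt_trans one_pos hc1
  -- bounds on the ratio (1-β i)/β i
  have hratio : ∀ i, c⁻¹ ≤ (1 - β i) / β i ∧ (1 - β i) / β i ≤ c := by
    intro i
    obtain ⟨h1, h2⟩ := hβ i
    have hβi0 : 0 < β i := lt_trans hv0 h1
    constructor
    · rw [hc, inv_div]
      exact div_le_div₀ (by linarith) (by linarith) hβi0 (by linarith)
    · exact div_le_div₀ (by linarith) (by linarith) hv0 (le_of_lt h1)
  -- A n and B n : uniform bounds on r = ((1-β i)/β i)^(1/D n)
  set A : ℕ → ℝ := fun n => c⁻¹ ^ (1 / D n) with hA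
  set B : ℕ → ℝ := fun n => c ^ (1 / D n) with hB
  have hA0 : ∀ n, 0 < A n := fun n => Real.rpow_pos_of_pos (inv_pos.2 hc0) _
  have hB0 : ∀ n, 0 < B n := fun n => Real.rpow_pos_of_pos hc0 _
  have hexp : ∀ n, 0 ≤ 1 / D n := fun n => le_of_lt (div_pos one_pos (hDpos n))
  have hrbound : ∀ n i, A n ≤ ((1 - β i) / β i) ^ (1 / D n) ∧
      ((1 - β i) / β i) ^ (1 / D n) ≤ B n := by
    intro n i
    obtain ⟨hl, hu⟩ := hratio i
    exact ⟨Real.rpow_le_rpow (le_of_lt (inv_pos.2 hc0)) hl (hexp n),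
      Real.rpow_le_rpow (le_trans (le_of_lt (inv_pos.2 hc0)) hl) hu (hexp n)⟩
  -- the term equals (1+r)/r^2
  have hterm : ∀ n i, βn n i / (1 - βn n i) ^ 2 =
      (1 + ((1 - β i) / β i) ^ (1 / D n)) / (((1 - β i) / β i) ^ (1 / D n)) ^ 2 := by
    intro n i
    set r := ((1 - β i) / β i) ^ (1 / D n) with hr
    have hr0 : 0 < r := Real.rpow_pos_of_pos
      (div_pos (by have := (hβ i).2; linarith) (lt_trans hv0 (hβ i).1)) _
    have h1r : (0:ℝ) < 1 + r := by linarith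
    rw [hβn n i, ← hr]
    field_simp
    rw [add_sub_cancel_left, div_self (pow_ne_zero 2 hr0.ne')]
  -- bounds on each term
  have htermub : ∀ n i, βn n i / (1 - βn n i) ^ 2 ≤ (1 + B n) / (A n) ^ 2 := by
    intro n i
    rw [hterm n i]
    obtain ⟨hl, hu⟩ := hrbound n i
    have hr0 : 0 < ((1 - β i) / β i) ^ (1 / D n) := lt_of_lt_of_le (hA0 n) hl
    exact div_le_div₀ (by positivity) (by linarith) (by positivity)
      (by nlinarith [hA0 n])
  have htermlb : ∀ n i, (1 + A n) / (B n) ^ 2 ≤ βn n i / (1 - βn n i) ^ 2 := by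
    intro n i
    rw [hterm n i]
    obtain ⟨hl, hu⟩ := hrbound n i
    have hr0 : 0 < ((1 - β i) / β i) ^ (1 / D n) := lt_of_lt_of_le (hA0 n) hl
    exact div_le_div₀ (by positivity) (by linarith) (by positivity)
      (by nlinarith [hB0 n])
  -- limits of A and B
  have hinv : Tendsto (fun n => 1 / D n) atTop (nhds 0) := by
    exact hDtop.inv_tendsto_atTop.congr (fun n => by simp [one_div])
  have hAlim : Tendsto A atTop (nhds 1) := by
    have := (Real.continuousAt_const_rpow (a := c⁻¹) (b := 0)
      (by positivity)).tendsto.comp hinv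
    simpa [hA, Function.comp_def, one_div, Real.rpow_zero] using this
  have hBlim : Tendsto B atTop (nhds 1) := by
    have := (Real.continuousAt_const_rpow (a := c) (b := 0)
      (ne_of_gt hc0)).tendsto.comp hinv
    simpa [hB, Function.comp_def, one_div, Real.rpow_zero] using this
  -- floor ratio limit
  have hfloor : Tendsto (fun n : ℕ => (⌊(n : ℝ) * t⌋₊ : ℝ) / n) atTop (nhds t) := by
    have := (tendsto_nat_floor_mul_div_atTop (a := t) ht).comp
      tendsto_natCast_atTop_atTop
    simpa [Function.comp_def, mul_comm] using this
  -- lower and upper sequences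
  have hlow : Tendsto (fun n : ℕ => ((⌊(n : ℝ) * t⌋₊ : ℝ) / n) * ((1 + A n) / (B n) ^ 2))
      atTop (nhds (2 * t)) := by
    have h2 : Tendsto (fun n => (1 + A n) / (B n) ^ 2) atTop (nhds 2) := by
      have := Tendsto.div ((tendsto_const_nhds (α := ℕ) (x := (1:ℝ))).add hAlim)
        (hBlim.pow 2) (by norm_num : ((1:ℝ)^2) ≠ 0)
      norm_num at this; exact this
    simpa [mul_comm] using hfloor.mul h2
  have hhigh : Tendsto (fun n : ℕ => ((⌊(n : ℝ) * t⌋₊ : ℝ) / n) * ((1 + B n) / (A n) ^ 2))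
      atTop (nhds (2 * t)) := by
    have h2 : Tendsto (fun n => (1 + B n) / (A n) ^ 2) atTop (nhds 2) := by
      have := Tendsto.div ((tendsto_const_nhds (α := ℕ) (x := (1:ℝ))).add hBlim)
        (hAlim.pow 2) (by norm_num : ((1:ℝ)^2) ≠ 0)
      norm_num at this; exact this
    simpa [mul_comm] using hfloor.mul h2
  -- squeeze
  refine tendsto_of_tendsto_of_tendsto_of_le_of_le' hlow hhigh ?_ ?_
  · filter_upwards [eventually_gt_atTop 0] with n hn
    have hn0 : (0:ℝ) < n := by exact_mod_cast hn
    have hsum : (⌊(n : ℝ) * t⌋₊ : ℝ) * ((1 + A n) / (B n) ^ 2) ≤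
        ∑ i ∈ Finset.Icc 1 ⌊(n : ℝ) * t⌋₊, βn n i / (1 - βn n i) ^ 2 := by
      have := Finset.card_nsmul_le_sum (Finset.Icc 1 ⌊(n : ℝ) * t⌋₊)
        (fun i => βn n i / (1 - βn n i) ^ 2) ((1 + A n) / (B n) ^ 2)
        (fun i _ => htermlb n i)
      simpa [Nat.card_Icc, nsmul_eq_mul] using this
    calc (⌊(n : ℝ) * t⌋₊ : ℝ) / n * ((1 + A n) / (B n) ^ 2)
        = (1 / n) * ((⌊(n : ℝ) * t⌋₊ : ℝ) * ((1 + A n) / (B n) ^ 2)) := by ring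
      _ ≤ _ := by
          apply mul_le_mul_of_nonneg_left hsum (by positivity)
  · filter_upwards [eventually_gt_atTop 0] with n hn
    have hn0 : (0:ℝ) < n := by exact_mod_cast hn
    have hsum : ∑ i ∈ Finset.Icc 1 ⌊(n : ℝ) * t⌋₊, βn n i / (1 - βn n i) ^ 2 ≤
        (⌊(n : ℝ) * t⌋₊ : ℝ) * ((1 + B n) / (A n) ^ 2) := by
      have := Finset.sum_le_card_nsmul (Finset.Icc 1 ⌊(n : ℝ) * t⌋₊)
        (fun i => βn n i / (1 - βn n i) ^ 2) ((1 + B n) / (A n) ^ 2)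
        (fun i _ => htermub n i)
      simpa [Nat.card_Icc, nsmul_eq_mul] using this
    calc (1 / (n:ℝ)) * ∑ i ∈ Finset.Icc 1 ⌊(n : ℝ) * t⌋₊, βn n i / (1 - βn n i) ^ 2
        ≤ (1 / n) * ((⌊(n : ℝ) * t⌋₊ : ℝ) * ((1 + B n) / (A n) ^ 2)) :=
          mul_le_mul_of_nonneg_left hsum (by positivity)
      _ = (⌊(n : ℝ) * t⌋₊ : ℝ) / n * ((1 + B n) / (A n) ^ 2) := by ring
end
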